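/- arXiv:1508.07633 — 4 statements merged into one kernel-verified Lean document; each statement's English description precedes it below -/
import Mathlib

section
/- Let A, B be n×n complex matrices and let C = A + B. Then the number of distinct eigenvalues of C satisfies |Λ(C)| ≤ (rank(B) + 1)·|Λ(A)| + d(A). -/
open Matrix Polynomial Module

/-- The set of distinct eigenvalues of a matrix: the roots of its characteristic polynomial. -/
noncomputable def eigSet {n : ℕ} (M : Matrix (Fin n) (Fin n) ℂ) : Finset ℂ :=
  M.charpoly.roots.toFinset

/-- Algebraic multiplicity of `μ` as an eigenvalue of `M` (multiplicity as a root of the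
characteristic polynomial; `0` if `μ` is not an eigenvalue). -/
noncomputable def algMult {n : ℕ} (M : Matrix (Fin n) (Fin n) ℂ) (μ : ℂ) : ℕ :=
  M.charpoly.rootMultiplicity μ

/-- Geometric multiplicity of `μ` as an eigenvalue of `M`: the dimension of `ker (M - μ I)`. -/
noncomputable def geomMult {n : ℕ} (M : Matrix (Fin n) (Fin n) ℂ) (μ : ℂ) : ℕ :=
  Module.finrank ℂ (LinearMap.ker (M - μ • (1 : Matrix (Fin n) (Fin n) ℂ)).mulVecLin)

/-- The defectivity of a matrix: the sum over its distinct eigenvalues of the differences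
between algebraic and geometric multiplicities. -/
noncomputable def defect {n : ℕ} (M : Matrix (Fin n) (Fin n) ℂ) : ℕ :=
  ∑ μ ∈ eigSet M, (algMult M μ - geomMult M μ)

/-- A matrix is diagonalizable if it is similar to a diagonal matrix. -/
def IsDiagonalizable {n : ℕ} (M : Matrix (Fin n) (Fin n) ℂ) : Prop :=
  ∃ P D : Matrix (Fin n) (Fin n) ℂ, IsUnit P ∧ D.IsDiag ∧ M = P * D * P⁻¹

/-! Let `p = ∏_{μ ∈ Λ(A)} (X - μ)`. Every eigenspace of `A` lies in the kernel of `p(A)`, and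
these eigenspaces are independent, so `rank p(A) ≤ n - ∑ m_g = d(A)`. Peeling off one linear
factor at a time, `p(A + B) - p(A)` is a sum of `|Λ(A)|` terms each of rank at most `rank B`.
Finally, on the eigenspace of `A + B` for an eigenvalue `λ ∉ Λ(A)`, `p(A + B)` acts as the
nonzero scalar `p(λ)`, so these eigenspaces lie in the range of `p(A + B)`, and there are at
most `rank p(A + B) ≤ d(A) + |Λ(A)| · rank B` of them. -/

section Field

variable {K : Type*} [Field K]

theorem Matrix.rank_add_le {m n : Type*} [Fintype n] (X Y : Matrix m n K) :
    (X + Y).rank ≤ X.rank + Y.rank := by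
  rw [Matrix.rank, Matrix.rank, Matrix.rank, Matrix.mulVecLin_add]
  refine (Submodule.finrank_mono ?_).trans (Submodule.finrank_add_le_finrank_add_finrank _ _)
  rintro - ⟨v, rfl⟩
  exact Submodule.mem_sup.2 ⟨_, ⟨v, rfl⟩, _, ⟨v, rfl⟩, rfl⟩

section Module

variable {V : Type*} [AddCommGroup V] [Module K V]

theorem iSupIndep.sum_finrank_le {ι : Type*} [Fintype ι] [FiniteDimensional K V]
    {p : ι → Submodule K V} (hp : iSupIndep p) {W : Submodule K V} (hW : ∀ i, p i ≤ W) :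
    ∑ i, finrank K (p i) ≤ finrank K W := by
  classical
  calc ∑ i, finrank K (p i) = finrank K (Π₀ i, p i) := (finrank_directSum _ _).symm
    _ = finrank K (LinearMap.range (DFinsupp.lsum ℕ fun i => (p i).subtype)) :=
      (LinearMap.finrank_range_of_inj hp.dfinsupp_lsum_injective).symm
    _ ≤ finrank K W := by
      rw [← Submodule.iSup_eq_range_dfinsupp_lsum]
      exact Submodule.finrank_mono (iSup_le hW)

theorem Module.End.eigenspace_le_ker_aeval {f : End K V} {p : K[X]} {μ : K}
    (hμ : p.IsRoot μ) : f.eigenspace μ ≤ LinearMap.ker (aeval f p) := fun v hv => by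
  rw [LinearMap.mem_ker, aeval_apply_of_mem_apply_eq_smul (mem_eigenspace_iff.1 hv), hμ.eq_zero,
    zero_smul]

theorem Module.End.eigenspace_le_range_aeval {f : End K V} {p : K[X]} {μ : K}
    (hμ : ¬p.IsRoot μ) : f.eigenspace μ ≤ LinearMap.range (aeval f p) := fun v hv =>
  ⟨(p.eval μ)⁻¹ • v, by
    rw [map_smul, aeval_apply_of_mem_apply_eq_smul (mem_eigenspace_iff.1 hv), inv_smul_smul₀ hμ]⟩

end Module

variable {m : Type*} [Fintype m] [DecidableEq m]

theorem Matrix.mulVecLin_aeval (T : Matrix m m K) (p : K[X]) :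
    (aeval T p).mulVecLin = aeval T.mulVecLin p :=
  (aeval_algHom_apply (toLinAlgEquiv' : Matrix m m K ≃ₐ[K] _).toAlgHom T p).symm

theorem rank_aeval_add_sub_aeval_prod_X_sub_C_le (A B : Matrix m m K) (s : Finset K) :
    (aeval (A + B) (∏ μ ∈ s, (X - C μ)) - aeval A (∏ μ ∈ s, (X - C μ))).rank
      ≤ s.card * B.rank := by
  classical
  induction s using Finset.induction_on with
  | empty => simp
  | insert a s ha ih =>
    set P := aeval (A + B) (∏ μ ∈ s, (X - C μ))
    set Q := aeval A (∏ μ ∈ s, (X - C μ))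
    have key : aeval (A + B) (∏ μ ∈ insert a s, (X - C μ))
        - aeval A (∏ μ ∈ insert a s, (X - C μ))
        = (A - algebraMap K _ a) * (P - Q) + B * P := by
      simp only [Finset.prod_insert ha, map_mul, map_sub, aeval_X, aeval_C, P, Q]
      noncomm_ring
    calc _ = ((A - algebraMap K _ a) * (P - Q) + B * P).rank := by rw [key]
      _ ≤ (P - Q).rank + B.rank :=
        (Matrix.rank_add_le _ _).trans
          (add_le_add (Matrix.rank_mul_le_right _ _) (Matrix.rank_mul_le_left _ _))
      _ ≤ (insert a s).card * B.rank := by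
        rw [Finset.card_insert_of_notMem ha, add_one_mul]
        exact Nat.add_le_add_right ih _

theorem card_le_rank_aeval_prod_X_sub_C (T : Matrix m m K) {S s : Finset K}
    (hS : ∀ μ ∈ S, End.HasEigenvalue T.mulVecLin μ) (hSs : Disjoint S s) :
    S.card ≤ (aeval T (∏ μ ∈ s, (X - C μ))).rank := by
  set p : K[X] := ∏ ν ∈ s, (X - C ν)
  have hp (μ : S) : ¬p.IsRoot μ := by
    simp only [p, IsRoot.def, eval_prod, eval_sub, eval_X, eval_C, Finset.prod_eq_zero_iff,
      sub_eq_zero, not_exists, not_and]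
    rintro ν hν rfl
    exact Finset.disjoint_left.1 hSs μ.2 hν
  have hle (μ : S) : End.eigenspace T.mulVecLin μ ≤ LinearMap.range (aeval T p).mulVecLin := by
    rw [Matrix.mulVecLin_aeval]
    exact End.eigenspace_le_range_aeval (hp μ)
  calc S.card = ∑ _μ : S, 1 := by simp
    _ ≤ ∑ μ : S, finrank K (End.eigenspace T.mulVecLin μ) :=
      Finset.sum_le_sum fun μ _ => Submodule.one_le_finrank_iff.2 (hS μ μ.2)
    _ ≤ _ :=
      ((End.eigenspaces_iSupIndep T.mulVecLin).comp Subtype.coe_injective).sum_finrank_le hle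

theorem Matrix.eigenspace_mulVecLin (T : Matrix m m K) (μ : K) :
    End.eigenspace T.mulVecLin μ = LinearMap.ker (T - μ • (1 : Matrix m m K)).mulVecLin := by
  ext v
  simp only [End.mem_eigenspace_iff, LinearMap.mem_ker, Matrix.mulVecLin_apply,
    Matrix.sub_mulVec, Matrix.smul_mulVec, Matrix.one_mulVec, sub_eq_zero]

end Field

section Complex

variable {n : ℕ}

theorem mem_eigSet_iff (M : Matrix (Fin n) (Fin n) ℂ) (μ : ℂ) :
    μ ∈ eigSet M ↔ End.HasEigenvalue M.mulVecLin μ := by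
  rw [eigSet, Multiset.mem_toFinset, mem_roots M.charpoly_monic.ne_zero,
    ← Matrix.charpoly_toLin', ← End.hasEigenvalue_iff_isRoot_charpoly]
  rfl

theorem sum_algMult (M : Matrix (Fin n) (Fin n) ℂ) : ∑ μ ∈ eigSet M, algMult M μ = n := by
  simp only [algMult, eigSet, ← count_roots]
  rw [Multiset.toFinset_sum_count_eq, splits_iff_card_roots.1 (IsAlgClosed.splits _),
    M.charpoly_natDegree_eq_dim, Fintype.card_fin]

theorem geomMult_eq_finrank_eigenspace (M : Matrix (Fin n) (Fin n) ℂ) (μ : ℂ) :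
    geomMult M μ = finrank ℂ (End.eigenspace M.mulVecLin μ) := by
  rw [geomMult, Matrix.eigenspace_mulVecLin]

theorem sum_geomMult_le_finrank_ker (M : Matrix (Fin n) (Fin n) ℂ) :
    ∑ μ ∈ eigSet M, geomMult M μ
      ≤ finrank ℂ (LinearMap.ker (aeval M (∏ μ ∈ eigSet M, (X - C μ))).mulVecLin) := by
  simp only [geomMult_eq_finrank_eigenspace]
  rw [Matrix.mulVecLin_aeval, ← Finset.sum_coe_sort (eigSet M)]
  refine ((End.eigenspaces_iSupIndep M.mulVecLin).comp (f := ((↑) : eigSet M → ℂ))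
    Subtype.coe_injective).sum_finrank_le fun μ => End.eigenspace_le_ker_aeval ?_
  simp only [IsRoot.def, eval_prod, eval_sub, eval_X, eval_C]
  exact Finset.prod_eq_zero μ.2 (sub_self _)

theorem rank_aeval_prod_X_sub_C_eigSet_le_defect (M : Matrix (Fin n) (Fin n) ℂ) :
    (aeval M (∏ μ ∈ eigSet M, (X - C μ))).rank ≤ defect M := by
  have hrank_nullity := LinearMap.finrank_range_add_finrank_ker
    (aeval M (∏ μ ∈ eigSet M, (X - C μ))).mulVecLin
  have hdefect : ∑ μ ∈ eigSet M, algMult M μ ≤ defect M + ∑ μ ∈ eigSet M, geomMult M μ := by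
    rw [defect, ← Finset.sum_add_distrib]
    exact Finset.sum_le_sum fun μ _ => le_tsub_add
  rw [Module.finrank_fin_fun] at hrank_nullity
  have halg := sum_algMult M
  have hgeom := sum_geomMult_le_finrank_ker M
  rw [Matrix.rank]
  omega

end Complex

/-- If `C = A + B`, then `|Λ(C)| ≤ (rank B + 1) · |Λ(A)| + d(A)`. -/
theorem distinct_eigenvalues_after_perturbation {n : ℕ}
    (A B C : Matrix (Fin n) (Fin n) ℂ) (hC : C = A + B) :
    (eigSet C).card ≤ (B.rank + 1) * (eigSet A).card + defect A := by
  subst hC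
  set p := ∏ μ ∈ eigSet A, (X - C μ)
  have hnew : (eigSet (A + B) \ eigSet A).card ≤ (aeval (A + B) p).rank :=
    card_le_rank_aeval_prod_X_sub_C (A + B)
      (fun μ hμ => (mem_eigSet_iff _ μ).1 (Finset.mem_sdiff.1 hμ).1) Finset.sdiff_disjoint
  have hperturb : (aeval (A + B) p).rank ≤ defect A + (eigSet A).card * B.rank := by
    calc (aeval (A + B) p).rank = (aeval A p + (aeval (A + B) p - aeval A p)).rank := by
          rw [add_sub_cancel]
      _ ≤ defect A + (eigSet A).card * B.rank :=
        (Matrix.rank_add_le _ _).trans (add_le_add (rank_aeval_prod_X_sub_C_eigSet_le_defect A)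
          (rank_aeval_add_sub_aeval_prod_X_sub_C_le A B _))
  calc (eigSet (A + B)).card
      = (eigSet (A + B) ∩ eigSet A).card + (eigSet (A + B) \ eigSet A).card :=
        (Finset.card_inter_add_card_sdiff _ _).symm
    _ ≤ (eigSet A).card + (defect A + (eigSet A).card * B.rank) :=
        add_le_add (Finset.card_le_card Finset.inter_subset_right) (hnew.trans hperturb)
    _ = (B.rank + 1) * (eigSet A).card + defect A := by ring
end

section
/- Let A, B be n×n complex matrices and let C = A + B. Then the sum of the algebraic multiplicities, as eigenvalues of C, over the distinct eigenvalues of A satisfies ∑_{λ ∈ Λ(A)} m_a(C, λ) ≥ n − rank(B)·|Λ(A)| − d(A), where m_a(C, λ) is taken to be 0 when λ is not an eigenvalue of C. -/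
open Matrix Polynomial Module

/-!
Adding `B` shrinks each eigenspace of `A` by at most `rank B` dimensions, because rank is
subadditive: `rank (A + B - μ) ≤ rank (A - μ) + rank B`. Since geometric multiplicities never
exceed algebraic ones, `m_g(A, μ) ≤ m_a(A + B, μ) + rank B`, and summing over `Λ(A)` with
`∑ m_g(A, μ) = n - d(A)` gives the bound.
-/

theorem LinearMap.finrank_ker_le_finrank_ker_add_add_finrank_range {K V W : Type*}
    [DivisionRing K] [AddCommGroup V] [Module K V] [FiniteDimensional K V] [AddCommGroup W]
    [Module K W] (f g : V →ₗ[K] W) :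
    finrank K (ker f) ≤ finrank K (ker (f + g)) + finrank K (range g) := by
  have hrange := (Submodule.finrank_mono (range_add_le f g)).trans
    (Submodule.finrank_add_le_finrank_add_finrank (range f) (range g))
  have hf := finrank_range_add_finrank_ker f
  have hfg := finrank_range_add_finrank_ker (f + g)
  omega

theorem Matrix.ker_mulVecLin_sub_smul_one {ι R : Type*} [Fintype ι] [DecidableEq ι] [CommRing R]
    (M : Matrix ι ι R) (μ : R) :
    LinearMap.ker (M - μ • (1 : Matrix ι ι R)).mulVecLin =
      Module.End.eigenspace M.mulVecLin μ := by
  rw [Module.End.eigenspace_def, ← Matrix.toLin'_apply', map_sub, map_smul, Matrix.toLin'_one,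
    Matrix.toLin'_apply']
  rfl

theorem geomMult_le_algMult {n : ℕ} (M : Matrix (Fin n) (Fin n) ℂ) (μ : ℂ) :
    geomMult M μ ≤ algMult M μ := by
  rw [geomMult, algMult, Matrix.ker_mulVecLin_sub_smul_one, ← Matrix.charpoly_mulVecLin]
  exact LinearMap.finrank_eigenspace_le _ μ

theorem geomMult_le_geomMult_add_add_rank {n : ℕ} (A B : Matrix (Fin n) (Fin n) ℂ) (μ : ℂ) :
    geomMult A μ ≤ geomMult (A + B) μ + B.rank := by
  have h : A + B - μ • 1 = (A - μ • 1) + B := by abel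
  rw [geomMult, geomMult, h, Matrix.mulVecLin_add]
  exact LinearMap.finrank_ker_le_finrank_ker_add_add_finrank_range _ _

theorem sum_algMult_eigSet {n : ℕ} (M : Matrix (Fin n) (Fin n) ℂ) :
    ∑ μ ∈ eigSet M, algMult M μ = n := by
  simp_rw [eigSet, algMult, ← Polynomial.count_roots]
  rw [Multiset.toFinset_sum_count_eq, IsAlgClosed.card_roots_eq_natDegree,
    Matrix.charpoly_natDegree_eq_dim, Fintype.card_fin]

theorem sum_geomMult_add_defect {n : ℕ} (M : Matrix (Fin n) (Fin n) ℂ) :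
    ∑ μ ∈ eigSet M, geomMult M μ + defect M = n := by
  rw [defect, ← Finset.sum_add_distrib]
  exact (Finset.sum_congr rfl fun μ _ => Nat.add_sub_cancel' (geomMult_le_algMult M μ)).trans
    (sum_algMult_eigSet M)

/-- `∑_{λ ∈ Λ(A)} m_a(C, λ) ≥ n - rank(B)·|Λ(A)| - d(A)`. -/
theorem sum_algMult_over_old_eigenvalues_ge {n : ℕ}
    (A B C : Matrix (Fin n) (Fin n) ℂ) (hC : C = A + B) :
    ((∑ μ ∈ eigSet A, algMult C μ : ℕ) : ℤ) ≥
      (n : ℤ) - (B.rank : ℤ) * (eigSet A).card - (defect A : ℤ) := by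
  subst hC
  have hterm (μ : ℂ) : geomMult A μ ≤ algMult (A + B) μ + B.rank :=
    (geomMult_le_geomMult_add_add_rank A B μ).trans
      (Nat.add_le_add_right (geomMult_le_algMult _ μ) _)
  have hsum := Finset.sum_le_sum fun μ (_ : μ ∈ eigSet A) => hterm μ
  rw [Finset.sum_add_distrib, Finset.sum_const, smul_eq_mul, mul_comm] at hsum
  have hA := sum_geomMult_add_defect A
  omega
end

section
/- Let A be a diagonalizable n×n complex matrix and let B be an n×n complex matrix of rank one, and set C = A + B. Then the degree of the minimal polynomial of C is at most twice the degree of the minimal polynomial of A. (Consequently, in exact arithmetic an optimal Krylov method solves a linear system with C in at most double the number of iterations required for A.) -/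
open Matrix Polynomial Module

/-! Let `u` span the range of `C - A`. The cyclic subspace `W = {p(A) u}` is `A`-invariant,
has dimension at most `deg μ_A` and contains the range of `C - A`, so it is `C`-invariant
as well.
As `A` and `C` agree modulo `W`, `μ_A(C)` maps everything into `W`, where `C` is killed by
`μ_{C|W}`. Hence `μ_C` divides `μ_{C|W} * μ_A`, whose degree is at most
`dim W + deg μ_A ≤ 2 deg μ_A`. -/

namespace Module.End

variable {K V : Type*} [Field K] [AddCommGroup V] [Module K V]

noncomputable def cyclicSubspace (g : End K V) (u : V) : Submodule K V :=
  LinearMap.range (LinearMap.applyₗ u ∘ₗ (aeval g).toLinearMap)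

section cyclicSubspace

variable {g : End K V} {u v : V}

theorem mem_cyclicSubspace : v ∈ g.cyclicSubspace u ↔ ∃ p : K[X], aeval g p u = v :=
  Iff.rfl

theorem self_mem_cyclicSubspace : u ∈ g.cyclicSubspace u :=
  mem_cyclicSubspace.2 ⟨1, by simp⟩

theorem apply_mem_cyclicSubspace (hv : v ∈ g.cyclicSubspace u) : g v ∈ g.cyclicSubspace u := by
  obtain ⟨p, rfl⟩ := mem_cyclicSubspace.1 hv
  exact mem_cyclicSubspace.2 ⟨X * p, by simp⟩

/-- Reducing modulo the minimal polynomial, `p(g) u = (p %ₘ minpoly g)(g) u`. -/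
theorem finrank_cyclicSubspace_le [FiniteDimensional K V] :
    finrank K (g.cyclicSubspace u) ≤ (minpoly K g).natDegree := by
  set d := (minpoly K g).natDegree
  have : Module.Finite K (degreeLT K d) := .equiv (degreeLTEquiv K d).symm
  have hmap : g.cyclicSubspace u =
      (degreeLT K d).map (LinearMap.applyₗ u ∘ₗ (aeval g).toLinearMap) := by
    refine le_antisymm ?_ LinearMap.map_le_range
    rintro _ ⟨p, rfl⟩
    refine ⟨p %ₘ minpoly K g, mem_degreeLT.2 ?_, by simp [minpoly.aeval_modByMonic_minpoly]⟩
    rw [← degree_eq_natDegree (minpoly.ne_zero (Algebra.IsIntegral.isIntegral g))]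
    exact degree_modByMonic_lt _ (minpoly.monic (Algebra.IsIntegral.isIntegral g))
  calc finrank K (g.cyclicSubspace u) ≤ finrank K (degreeLT K d) :=
        hmap ▸ Submodule.finrank_map_le _ _
    _ = d := by simp [(degreeLTEquiv K d).finrank_eq]

end cyclicSubspace

theorem natDegree_minpoly_le_finrank [FiniteDimensional K V] (f : End K V) :
    (minpoly K f).natDegree ≤ finrank K V :=
  f.charpoly_natDegree ▸
    natDegree_le_of_dvd (LinearMap.minpoly_dvd_charpoly f) f.charpoly_monic.ne_zero

theorem aeval_restrict_apply {f : End K V} {W : Submodule K V} (hf : ∀ w ∈ W, f w ∈ W)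
    (p : K[X]) (w : W) : (aeval (f.restrict hf) p w : V) = aeval f p w := by
  induction p using Polynomial.induction_on' with
  | add p q hp hq => simp [hp, hq]
  | monomial k a => simp [aeval_monomial, pow_restrict k hf, LinearMap.restrict_apply]

theorem minpoly_dvd_minpoly_restrict_mul [FiniteDimensional K V] {f : End K V}
    {W : Submodule K V} (hf : ∀ w ∈ W, f w ∈ W) {p : K[X]} (hp : ∀ x, aeval f p x ∈ W) :
    minpoly K f ∣ minpoly K (f.restrict hf) * p := by
  refine minpoly.dvd K f (LinearMap.ext fun x => ?_)
  rw [map_mul, mul_apply, ← aeval_restrict_apply hf _ ⟨_, hp x⟩, minpoly.aeval]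
  rfl

theorem pow_apply_sub_pow_apply_mem {f g : End K V} {W : Submodule K V}
    (hf : ∀ w ∈ W, f w ∈ W) (hfg : LinearMap.range (f - g) ≤ W) (k : ℕ) (x : V) :
    (f ^ k) x - (g ^ k) x ∈ W := by
  induction k with
  | zero => simp
  | succ k ih =>
    have hsplit : (f ^ (k + 1)) x - (g ^ (k + 1)) x =
        f ((f ^ k) x - (g ^ k) x) + (f - g) ((g ^ k) x) := by
      simp only [pow_succ', mul_apply, map_sub, LinearMap.sub_apply]
      abel
    rw [hsplit]
    exact W.add_mem (hf _ ih) (hfg (LinearMap.mem_range_self _ _))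

theorem aeval_apply_sub_aeval_apply_mem {f g : End K V} {W : Submodule K V}
    (hf : ∀ w ∈ W, f w ∈ W) (hfg : LinearMap.range (f - g) ≤ W) (p : K[X]) (x : V) :
    aeval f p x - aeval g p x ∈ W := by
  induction p using Polynomial.induction_on' with
  | add p q hp hq =>
    rw [map_add, map_add, LinearMap.add_apply, LinearMap.add_apply, add_sub_add_comm]
    exact W.add_mem hp hq
  | monomial k a =>
    simpa [aeval_monomial, ← smul_sub] using W.smul_mem a (pow_apply_sub_pow_apply_mem hf hfg k x)

theorem natDegree_minpoly_le_finrank_add [FiniteDimensional K V] {f g : End K V}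
    {W : Submodule K V} (hg : ∀ w ∈ W, g w ∈ W) (hfg : LinearMap.range (f - g) ≤ W) :
    (minpoly K f).natDegree ≤ finrank K W + (minpoly K g).natDegree := by
  have hf : ∀ w ∈ W, f w ∈ W := fun w hw => by
    simpa using W.add_mem (hg w hw) (hfg (LinearMap.mem_range_self (f - g) w))
  have hp (x : V) : aeval f (minpoly K g) x ∈ W := by
    simpa using aeval_apply_sub_aeval_apply_mem hf hfg (minpoly K g) x
  have hmonic_f : (minpoly K (f.restrict hf)).Monic :=
    minpoly.monic (Algebra.IsIntegral.isIntegral _)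
  have hmonic_g : (minpoly K g).Monic := minpoly.monic (Algebra.IsIntegral.isIntegral _)
  calc (minpoly K f).natDegree ≤ (minpoly K (f.restrict hf) * minpoly K g).natDegree :=
        natDegree_le_of_dvd (minpoly_dvd_minpoly_restrict_mul hf hp) (hmonic_f.mul hmonic_g).ne_zero
    _ = (minpoly K (f.restrict hf)).natDegree + (minpoly K g).natDegree :=
        hmonic_f.natDegree_mul hmonic_g
    _ ≤ finrank K W + (minpoly K g).natDegree := by
        gcongr; exact natDegree_minpoly_le_finrank _

theorem natDegree_minpoly_le_two_mul_of_finrank_range_sub_le_one [FiniteDimensional K V]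
    {f g : End K V} (hfg : finrank K (LinearMap.range (f - g)) ≤ 1) :
    (minpoly K f).natDegree ≤ 2 * (minpoly K g).natDegree := by
  have : (LinearMap.range (f - g)).IsPrincipal :=
    (Submodule.finrank_le_one_iff_isPrincipal _).1 hfg
  set u := Submodule.IsPrincipal.generator (LinearMap.range (f - g))
  have hrange : LinearMap.range (f - g) ≤ g.cyclicSubspace u := by
    rw [← Submodule.IsPrincipal.span_singleton_generator (LinearMap.range (f - g)),
      Submodule.span_singleton_le_iff_mem]
    exact self_mem_cyclicSubspace
  calc (minpoly K f).natDegree ≤ finrank K (g.cyclicSubspace u) + (minpoly K g).natDegree :=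
        natDegree_minpoly_le_finrank_add (fun _ => apply_mem_cyclicSubspace) hrange
    _ ≤ 2 * (minpoly K g).natDegree := by
        have := finrank_cyclicSubspace_le (g := g) (u := u)
        omega

end Module.End

theorem minpoly_degree_rank_one_update_general {n : ℕ}
    (A B C : Matrix (Fin n) (Fin n) ℂ)
    (hB : B.rank = 1) (hC : C = A + B) :
    (minpoly ℂ C).natDegree ≤ 2 * (minpoly ℂ A).natDegree := by
  rw [← Matrix.minpoly_toLin', ← Matrix.minpoly_toLin' A]
  apply Module.End.natDegree_minpoly_le_two_mul_of_finrank_range_sub_le_one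
  rw [hC, map_add, add_sub_cancel_left]
  exact hB.le

/-- a rank one update of a diagonalizable matrix at most doubles the degree of
the minimal polynomial (hence the number of Krylov iterations needed for exact solution). -/
theorem minpoly_degree_rank_one_update {n : ℕ}
    (A B C : Matrix (Fin n) (Fin n) ℂ) (hA : IsDiagonalizable A)
    (hB : B.rank = 1) (hC : C = A + B) :
    (minpoly ℂ C).natDegree ≤ 2 * (minpoly ℂ A).natDegree :=
  minpoly_degree_rank_one_update_general A B C hB hC
end

section
/- Let A be a diagonalizable n×n complex matrix, let B be an n×n complex matrix of rank one, and set C = A + B. If C is also diagonalizable, then the degree of the minimal polynomial of C equals |Λ(C)| and satisfies deg(minpoly C) = |Λ(C)| ≤ 2·|Λ(A)| = 2·deg(minpoly A). -/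
open Matrix Polynomial Module

/-!
Let `p` be the minimal polynomial of `A`. As `p(A) = 0`, we have `p(C) = p(A + B) - p(A)`, and
the identity `(qX)(A + B) - (qX)(A) = (q(A + B) - q(A))(A + B) + q(A) B` shows by induction on the
degree that this matrix has rank at most `deg p · rank B = deg p`. An eigenvalue `μ` of `C` with
`p(μ) ≠ 0` has an eigenvector `v` with `p(C) v = p(μ) v ≠ 0`, and eigenvectors for distinct
eigenvalues are independent, so there are at most `rank p(C)` such `μ`; every other eigenvalue
of `C` is a root of `p`, i.e. an eigenvalue of `A`. Finally, the minimal polynomial of a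
diagonalizable matrix divides `∏ (X - d)` over its distinct diagonal entries `d`, so its roots
are simple and its degree is the number of eigenvalues.
-/

section Rank

variable {K m n : Type*} [Field K] [Fintype n]

theorem Matrix.rank_add_le_s9 (A B : Matrix m n K) : (A + B).rank ≤ A.rank + B.rank := by
  rw [Matrix.rank, Matrix.mulVecLin_add]
  exact (Submodule.finrank_mono (LinearMap.range_add_le _ _)).trans
    (Submodule.finrank_add_le_finrank_add_finrank _ _)

theorem Matrix.rank_aeval_add_sub_aeval_le [DecidableEq n] (A B : Matrix n n K) (p : K[X]) :
    (aeval (A + B) p - aeval A p).rank ≤ p.natDegree * B.rank := by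
  induction p using Polynomial.recOnHorner with
  | M0 => simp
  | MC p a _ _ ih =>
    rwa [map_add, map_add, aeval_C, aeval_C, add_sub_add_right_eq_sub, natDegree_add_C]
  | MX p hp ih =>
    have hexpand : aeval (A + B) (p * X) - aeval A (p * X)
        = (aeval (A + B) p - aeval A p) * (A + B) + aeval A p * B := by
      simp only [map_mul, aeval_X]
      noncomm_ring
    rw [hexpand, natDegree_mul_X hp]
    calc ((aeval (A + B) p - aeval A p) * (A + B) + aeval A p * B).rank
        ≤ ((aeval (A + B) p - aeval A p) * (A + B)).rank + (aeval A p * B).rank :=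
          rank_add_le_s9 _ _
      _ ≤ (aeval (A + B) p - aeval A p).rank + B.rank :=
          add_le_add (rank_mul_le_left _ _) (rank_mul_le_right _ _)
      _ ≤ p.natDegree * B.rank + B.rank := by gcongr
      _ = (p.natDegree + 1) * B.rank := by ring

end Rank

theorem Module.End.card_le_finrank_range_aeval {K V : Type*} [Field K] [AddCommGroup V]
    [Module K V] [FiniteDimensional K V] (f : End K V) (p : K[X]) (s : Finset K)
    (hs : ∀ μ ∈ s, f.HasEigenvalue μ ∧ ¬p.IsRoot μ) :
    s.card ≤ finrank K (LinearMap.range (aeval f p)) := by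
  choose v hv using fun μ : s => (hs μ μ.2).1.exists_hasEigenvector
  let w : s → LinearMap.range (aeval f p) := fun μ =>
    ⟨aeval f p (v μ), LinearMap.mem_range_self _ _⟩
  have hw : LinearIndependent K w := by
    apply LinearIndependent.of_comp (LinearMap.range (aeval f p)).subtype
    have heq : (LinearMap.range (aeval f p)).subtype ∘ w =
        fun μ : s => p.eval (μ : K) • v μ :=
      funext fun μ => aeval_apply_of_hasEigenvector (hv μ)
    rw [heq]
    exact (eigenvectors_linearIndependent' f _ Subtype.coe_injective v hv).units_smul
      fun μ => Units.mk0 _ (hs μ μ.2).2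
  simpa using hw.fintype_card_le_finrank

theorem minpoly_units_conj {K A : Type*} [CommRing K] [Ring A] [Algebra K A] (u : Aˣ) (a : A) :
    minpoly K (u * a * ↑u⁻¹) = minpoly K a :=
  minpoly.algEquiv_eq (MulSemiringAction.toAlgEquiv K A (ConjAct.toConjAct u)) a

theorem Matrix.minpoly_diagonal_dvd {K m : Type*} [Field K] [Fintype m] [DecidableEq m]
    [DecidableEq K] (d : m → K) :
    minpoly K (diagonal d) ∣ ∏ μ ∈ Finset.univ.image d, (X - C μ) := by
  refine minpoly.dvd K _ ?_
  rw [← diagonalAlgHom_apply K, aeval_algHom_apply, aeval_pi_apply]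
  refine (congrArg _ (funext fun j => ?_)).trans (map_zero _)
  rw [map_prod]
  exact Finset.prod_eq_zero (Finset.mem_image_of_mem d (Finset.mem_univ j)) (by simp)

section Eigenvalues

variable {n : ℕ}

theorem mem_eigSet_iff_hasEigenvalue {M : Matrix (Fin n) (Fin n) ℂ} {μ : ℂ} :
    μ ∈ eigSet M ↔ End.HasEigenvalue (toLin' M) μ := by
  rw [eigSet, Multiset.mem_toFinset, mem_roots M.charpoly_monic.ne_zero,
    End.hasEigenvalue_iff_isRoot_charpoly, charpoly_toLin']

theorem eigSet_eq_roots_minpoly (M : Matrix (Fin n) (Fin n) ℂ) :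
    eigSet M = (minpoly ℂ M).roots.toFinset := by
  ext μ
  rw [mem_eigSet_iff_hasEigenvalue, End.hasEigenvalue_iff_isRoot, Multiset.mem_toFinset,
    mem_roots (minpoly.ne_zero (Algebra.IsIntegral.isIntegral M)),
    ← minpoly.algEquiv_eq toLinAlgEquiv' M]
  rfl

theorem IsDiagonalizable.nodup_roots_minpoly {M : Matrix (Fin n) (Fin n) ℂ}
    (hM : IsDiagonalizable M) : (minpoly ℂ M).roots.Nodup := by
  obtain ⟨P, D, ⟨u, rfl⟩, hD, rfl⟩ := hM
  rw [← coe_units_inv, minpoly_units_conj, ← hD.diagonal_diag]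
  refine Multiset.nodup_of_le ?_ (Finset.univ.image D.diag).nodup
  rw [← roots_prod_X_sub_C]
  exact roots.le_of_dvd (monic_prod_of_monic _ _ fun μ _ => monic_X_sub_C μ).ne_zero
    (minpoly_diagonal_dvd _)

theorem IsDiagonalizable.natDegree_minpoly {M : Matrix (Fin n) (Fin n) ℂ}
    (hM : IsDiagonalizable M) : (minpoly ℂ M).natDegree = (eigSet M).card := by
  rw [eigSet_eq_roots_minpoly, Multiset.toFinset_card_of_nodup hM.nodup_roots_minpoly,
    (IsAlgClosed.splits _).natDegree_eq_card_roots]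

theorem card_filter_eigSet_not_isRoot_le_rank (M : Matrix (Fin n) (Fin n) ℂ) (p : ℂ[X]) :
    ((eigSet M).filter fun μ => ¬p.IsRoot μ).card ≤ (aeval M p).rank := by
  have hlin : (aeval M p).mulVecLin = aeval (toLin' M) p :=
    (aeval_algHom_apply toLinAlgEquiv'.toAlgHom M p).symm
  rw [Matrix.rank, hlin]
  refine End.card_le_finrank_range_aeval _ p _ fun μ hμ => ?_
  rwa [Finset.mem_filter, mem_eigSet_iff_hasEigenvalue] at hμ

end Eigenvalues

/-- if `C = A + B` with `A` diagonalizable, `B` of rank one, and `C`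
diagonalizable, then `deg (minpoly C) = |Λ(C)| ≤ 2·|Λ(A)| = 2·deg (minpoly A)`. -/
theorem minpoly_degree_eq_card_and_le {n : ℕ}
    (A B C : Matrix (Fin n) (Fin n) ℂ) (hA : IsDiagonalizable A)
    (hB : B.rank = 1) (hC : C = A + B) (hCdiag : IsDiagonalizable C) :
    (minpoly ℂ C).natDegree = (eigSet C).card ∧
      (eigSet C).card ≤ 2 * (eigSet A).card ∧
      2 * (eigSet A).card = 2 * (minpoly ℂ A).natDegree := by
  have hdegA := hA.natDegree_minpoly
  refine ⟨hCdiag.natDegree_minpoly, ?_, by rw [hdegA]⟩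
  set p := minpoly ℂ A
  have hroots : ((eigSet C).filter p.IsRoot).card ≤ (eigSet A).card :=
    Finset.card_le_card fun μ hμ => by
      rw [eigSet_eq_roots_minpoly A, Multiset.mem_toFinset,
        mem_roots (minpoly.ne_zero (Algebra.IsIntegral.isIntegral A))]
      exact (Finset.mem_filter.1 hμ).2
  have hrank : (aeval C p).rank ≤ (eigSet A).card :=
    calc (aeval C p).rank = (aeval (A + B) p - aeval A p).rank := by
          rw [minpoly.aeval, sub_zero, hC]
      _ ≤ p.natDegree * B.rank := rank_aeval_add_sub_aeval_le A B p
      _ = (eigSet A).card := by rw [hB, mul_one, hdegA]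
  calc (eigSet C).card
      = ((eigSet C).filter p.IsRoot).card + ((eigSet C).filter fun μ => ¬p.IsRoot μ).card :=
        (Finset.card_filter_add_card_filter_not _).symm
    _ ≤ (eigSet A).card + (eigSet A).card :=
        add_le_add hroots ((card_filter_eigSet_not_isRoot_le_rank C p).trans hrank)
    _ = 2 * (eigSet A).card := (two_mul _).symm
end
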